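/- Fix integers j ≥ 1 and r ≥ 1 with j + r + 1 ≤ n and let B = {j+1, …, j+r}. Suppose the eigengap assumption holds: φ_j < φ_{j+1}, φ_{j+r} < φ_{j+r+1}, ψ_j < ψ_{j+1} and ψ_{j+r} < ψ_{j+r+1}. Let p be a real polynomial; set a₂ = ψ_{j+1} and b₂ = ψ_{j+r}. Let δ₂ > 0 be a real number such that: (i) for every l ∈ {1,…,n} \ B, either p(φ_l) ≥ b₂ + δ₂ or p(φ_l) ≤ a₂ − δ₂; (ii) for every i ∈ B, a₂ − p(φᵢ) < δ₂ and p(φᵢ) − b₂ < δ₂. Let W_j = [w_{j+1}, …, w_{j+r}] ∈ 𝕍_{n,r} and V_j = [v_{j+1}, …, v_{j+r}] ∈ 𝕍_{n,r}. Then there exists an orthogonal matrix Q ∈ O(r) such that ‖W_j − V_j Q‖_F ≤ c_{n,r} · ‖p(Φ) − Ψ‖₂ / δ₂. -/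

import Mathlib

open Matrix

/-- The Frobenius norm of a real matrix: the square root of the sum of squared entries. -/
noncomputable def frobNorm {m r : ℕ} (M : Matrix (Fin m) (Fin r) ℝ) : ℝ :=
  Real.sqrt (∑ i, ∑ j, (M i j) ^ 2)

/-- The spectral norm (largest singular value) of a real matrix, as the operator norm of
the induced linear map between Euclidean spaces. -/
noncomputable def specNorm {m r : ℕ} (M : Matrix (Fin m) (Fin r) ℝ) : ℝ :=
  ‖LinearMap.toContinuousLinearMap (Matrix.toEuclideanLin M)‖

open Matrix
open scoped Matrix.Norms.L2Operator

theorem dk_aeval_diag {n : ℕ} (φ : Fin n → ℝ) (p : Polynomial ℝ) :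
    Polynomial.aeval (Matrix.diagonal φ) p = Matrix.diagonal (fun i => p.eval (φ i)) := by
  have h := Polynomial.aeval_algHom_apply (Matrix.diagonalAlgHom (n := Fin n) (α := ℝ) ℝ) φ p
  simp only [Matrix.diagonalAlgHom_apply] at h
  rw [h]
  have : (Polynomial.aeval φ) p = fun i => p.eval (φ i) := by
    rw [Polynomial.aeval_pi_apply]; funext i; simp [Polynomial.aeval_def]
  rw [this]

theorem dk_aeval_conj {n : ℕ} (W D : Matrix (Fin n) (Fin n) ℝ) (h1 : Wᵀ * W = 1)
    (h2 : W * Wᵀ = 1) (p : Polynomial ℝ) :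
    Polynomial.aeval (W * D * Wᵀ) p = W * Polynomial.aeval D p * Wᵀ := by
  have hpow : ∀ m : ℕ, (W * D * Wᵀ) ^ m = W * D ^ m * Wᵀ := by
    intro m
    induction m with
    | zero =>
        simp only [pow_zero, Matrix.mul_one, h2]
    | succ m ih =>
        rw [pow_succ, ih, pow_succ]
        calc W * D ^ m * Wᵀ * (W * D * Wᵀ) = W * D ^ m * (Wᵀ * W) * (D * Wᵀ) := by noncomm_ring
        _ = W * (D ^ m * D) * Wᵀ := by rw [h1, mul_one]; noncomm_ring
  rw [Polynomial.aeval_eq_sum_range, Polynomial.aeval_eq_sum_range, Matrix.mul_sum,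
    Matrix.sum_mul]
  refine Finset.sum_congr rfl fun i _ => ?_
  rw [hpow, mul_smul_comm, smul_mul_assoc]

theorem dk_col_norm_bound {m r : ℕ} (M : Matrix (Fin m) (Fin r) ℝ) (k : Fin r) :
    ∑ i, (M i k) ^ 2 ≤ ‖M‖ ^ 2 := by
  have h := Matrix.l2_opNorm_mulVec M ((EuclideanSpace.equiv (Fin r) ℝ).symm (Pi.single k 1))
  have hx : ‖(EuclideanSpace.equiv (Fin r) ℝ).symm (Pi.single k (1:ℝ))‖ = 1 := by
    simp
  rw [hx, mul_one] at h
  have hnn : ‖(EuclideanSpace.equiv (Fin m) ℝ).symm (M *ᵥ ((EuclideanSpace.equiv (Fin r) ℝ).symm (Pi.single k 1)))‖ ^ 2 = ∑ i, (M i k)^2 := by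
    rw [EuclideanSpace.norm_eq, Real.sq_sqrt (by positivity)]
    refine Finset.sum_congr rfl fun i _ => ?_
    simp [Matrix.mulVec, dotProduct, EuclideanSpace.single_apply]
  calc ∑ i, (M i k) ^ 2 = _ := hnn.symm
  _ ≤ ‖M‖ ^ 2 := by
      have h0 : (0:ℝ) ≤ ‖M‖ := (norm_nonneg _)
      nlinarith [h, norm_nonneg ((EuclideanSpace.equiv (Fin m) ℝ).symm (M *ᵥ ((EuclideanSpace.equiv (Fin r) ℝ).symm (Pi.single k 1))))]

theorem dk_transpose_norm_eq {m r : ℕ} (M : Matrix (Fin m) (Fin r) ℝ) : ‖Mᵀ‖ = ‖M‖ := by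
  have : Mᴴ = Mᵀ := by simp
  rw [← this, Matrix.l2_opNorm_conjTranspose]

/-- Frobenius-squared vs spectral norm, with min of dims. -/
theorem dk_frobSq_le_min {m r : ℕ} (M : Matrix (Fin m) (Fin r) ℝ) :
    ∑ i, ∑ k, (M i k) ^ 2 ≤ (min m r : ℕ) * ‖M‖ ^ 2 := by
  have hcols : ∀ (m' r' : ℕ) (N : Matrix (Fin m') (Fin r') ℝ),
      ∑ i, ∑ k, (N i k) ^ 2 ≤ (r' : ℝ) * ‖N‖ ^ 2 := by
    intro m' r' N
    rw [Finset.sum_comm]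
    calc ∑ k, ∑ i, (N i k) ^ 2 ≤ ∑ _k : Fin r', ‖N‖ ^ 2 :=
      Finset.sum_le_sum fun k _ => dk_col_norm_bound N k
    _ = (r' : ℝ) * ‖N‖ ^ 2 := by simp [mul_comm]
  rcases le_total m r with hmr | hmr
  · rw [min_eq_left hmr]
    have := hcols r m Mᵀ
    rw [dk_transpose_norm_eq] at this
    calc ∑ i, ∑ k, (M i k) ^ 2 = ∑ k : Fin r, ∑ i : Fin m, (Mᵀ k i) ^ 2 := by
          rw [Finset.sum_comm]; rfl
    _ ≤ (m : ℝ) * ‖M‖ ^ 2 := this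
  · rw [min_eq_right hmr]; exact hcols m r M

theorem dk_norm_one_le {c : ℕ} : ‖(1 : Matrix (Fin c) (Fin c) ℝ)‖ ≤ 1 := by
  rw [Matrix.l2_opNorm_def]
  apply ContinuousLinearMap.opNorm_le_bound _ zero_le_one
  intro x
  simp [Matrix.toEuclideanLin_apply]

theorem dk_norm_le_one_of_orthocols {m r : ℕ} (M : Matrix (Fin m) (Fin r) ℝ)
    (h : Mᵀ * M = 1) : ‖M‖ ≤ 1 := by
  have h1 : ‖M‖ * ‖M‖ = ‖Mᴴ * M‖ := (Matrix.l2_opNorm_conjTranspose_mul_self M).symm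
  have h2 : Mᴴ = Mᵀ := by simp
  rw [h2, h] at h1
  nlinarith [norm_nonneg M, dk_norm_one_le (c := r)]

theorem dk_procrustes {r : ℕ} (S : Matrix (Fin r) (Fin r) ℝ)
    (hcontr : ∀ x : Fin r → ℝ, x ⬝ᵥ ((Sᵀ * S) *ᵥ x) ≤ x ⬝ᵥ x) :
    ∃ Q : Matrix (Fin r) (Fin r) ℝ, Qᵀ * Q = 1 ∧ Q * Qᵀ = 1 ∧
      (Sᵀ * S).trace ≤ (S * Q).trace := by
  classical
  have hA : (Sᵀ * S).IsHermitian := by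
    have h : (Sᵀ * S)ᴴ = (Sᵀ * S)ᵀ := by simp
    rw [Matrix.IsHermitian, h, Matrix.transpose_mul, Matrix.transpose_transpose]
  set d : Fin r → ℝ := hA.eigenvalues with hd
  set O : Matrix (Fin r) (Fin r) ℝ := (hA.eigenvectorUnitary : Matrix (Fin r) (Fin r) ℝ) with hO
  have hstar : star O = Oᵀ := by
    ext i k; simp [Matrix.star_apply]
  have hO1 : Oᵀ * O = 1 := by
    have h := (Matrix.mem_unitaryGroup_iff'.mp (hA.eigenvectorUnitary).2)
    rwa [hstar] at h
  have hO2 : O * Oᵀ = 1 := by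
    have h := (Matrix.mem_unitaryGroup_iff.mp (hA.eigenvectorUnitary).2)
    rwa [hstar] at h
  have hspec : Sᵀ * S = O * Matrix.diagonal d * Oᵀ := by
    have h := hA.spectral_theorem
    rw [Unitary.conjStarAlgAut_apply, ← hO, hstar] at h
    simpa using h
  set T : Matrix (Fin r) (Fin r) ℝ := S * O with hT
  have hTT : Tᵀ * T = Matrix.diagonal d := by
    rw [hT, Matrix.transpose_mul]
    calc Oᵀ * Sᵀ * (S * O) = Oᵀ * (Sᵀ * S) * O := by noncomm_ring
    _ = Oᵀ * (O * Matrix.diagonal d * Oᵀ) * O := by rw [← hspec]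
    _ = (Oᵀ * O) * Matrix.diagonal d * (Oᵀ * O) := by noncomm_ring
    _ = Matrix.diagonal d := by rw [hO1]; simp
  have hcol : ∀ k m : Fin r, (∑ i, T i k * T i m) = if k = m then d k else 0 := by
    intro k m
    have h := congrFun (congrFun hTT k) m
    simpa [Matrix.mul_apply, Matrix.transpose_apply, Matrix.diagonal_apply] using h
  have hd0 : ∀ k, 0 ≤ d k := by
    intro k
    have h := hcol k k
    simp only [if_true, eq_self_iff_true] at h
    rw [← h]
    exact Finset.sum_nonneg fun i _ => mul_self_nonneg _
  have hd1 : ∀ k, d k ≤ 1 := by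
    intro k
    have hsum : d k = (fun i => O i k) ⬝ᵥ ((Sᵀ * S) *ᵥ (fun i => O i k)) := by
      rw [← Matrix.mulVec_mulVec, dotProduct_mulVec, Matrix.vecMul_transpose]
      have hvec : S *ᵥ (fun i => O i k) = fun i => T i k := by
        funext i
        simp [hT, Matrix.mulVec, Matrix.mul_apply, dotProduct]
      rw [hvec]
      have h := hcol k k
      simp only [if_true, eq_self_iff_true] at h
      rw [← h]
      rfl
    have hunit : (fun i => O i k) ⬝ᵥ (fun i => O i k) = 1 := by
      have h := congrFun (congrFun hO1 k) k
      simpa [Matrix.mul_apply, Matrix.transpose_apply, dotProduct, Matrix.one_apply] using h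
    calc d k = _ := hsum
    _ ≤ (fun i => O i k) ⬝ᵥ (fun i => O i k) := hcontr _
    _ = 1 := hunit
  classical
  set v : Fin r → EuclideanSpace ℝ (Fin r) :=
    fun k => (WithLp.equiv 2 (Fin r → ℝ)).symm (fun i => (Real.sqrt (d k))⁻¹ * T i k) with hv
  have hvapp : ∀ k i, v k i = (Real.sqrt (d k))⁻¹ * T i k := fun k i => rfl
  set s : Set (Fin r) := {k | d k ≠ 0} with hsdef
  have hortho : Orthonormal ℝ (s.restrict v) := by
    rw [orthonormal_iff_ite]
    rintro ⟨k, hk⟩ ⟨m, hm⟩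
    have hk' : d k ≠ 0 := hk
    have hm' : d m ≠ 0 := hm
    have hinner : (inner ℝ (v k) (v m) : ℝ)
        = (Real.sqrt (d k))⁻¹ * ((Real.sqrt (d m))⁻¹ * (∑ i, T i k * T i m)) := by
      rw [PiLp.inner_apply]
      simp only [RCLike.inner_apply, conj_trivial, hvapp]
      rw [Finset.mul_sum, Finset.mul_sum]
      refine Finset.sum_congr rfl fun i _ => by ring
    show (inner ℝ (v k) (v m) : ℝ) = _
    rw [hinner, hcol k m]
    by_cases hkm : k = m
    · subst hkm
      simp only [if_true, eq_self_iff_true, Subtype.mk_eq_mk]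
      have hsq : Real.sqrt (d k) * Real.sqrt (d k) = d k := Real.mul_self_sqrt (hd0 k)
      have hpos : (0:ℝ) < Real.sqrt (d k) :=
        Real.sqrt_pos.mpr (lt_of_le_of_ne (hd0 k) (Ne.symm hk'))
      field_simp
      rw [Real.sq_sqrt (hd0 k)]
    · have : (⟨k, hk⟩ : s) ≠ ⟨m, hm⟩ := by simp [Subtype.mk_eq_mk, hkm]
      rw [if_neg hkm, if_neg this]
      ring
  have card : Module.finrank ℝ (EuclideanSpace ℝ (Fin r)) = Fintype.card (Fin r) := by simp
  obtain ⟨b, hb⟩ := hortho.exists_orthonormalBasis_extension_of_card_eq card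
  set U : Matrix (Fin r) (Fin r) ℝ := Matrix.of (fun i k => b k i) with hUdef
  have hU1 : Uᵀ * U = 1 := by
    ext k m
    have h := orthonormal_iff_ite.mp b.orthonormal k m
    rw [PiLp.inner_apply] at h
    simp only [RCLike.inner_apply, conj_trivial] at h
    simpa [Matrix.mul_apply, Matrix.one_apply, hUdef, mul_comm] using h
  have hU2 : U * Uᵀ = 1 := mul_eq_one_comm.mp hU1
  refine ⟨O * Uᵀ, ?_, ?_, ?_⟩
  · rw [Matrix.transpose_mul, Matrix.transpose_transpose]
    calc U * Oᵀ * (O * Uᵀ) = U * (Oᵀ * O) * Uᵀ := by noncomm_ring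
    _ = 1 := by rw [hO1, Matrix.mul_one, hU2]
  · rw [Matrix.transpose_mul, Matrix.transpose_transpose]
    calc O * Uᵀ * (U * Oᵀ) = O * (Uᵀ * U) * Oᵀ := by noncomm_ring
    _ = 1 := by rw [hU1, Matrix.mul_one, hO2]
  · have htr1 : (Sᵀ * S).trace = ∑ k, d k := by
      rw [hspec, Matrix.trace_mul_cycle, hO1, Matrix.one_mul,
        Matrix.trace_diagonal]
    have htr2 : (S * (O * Uᵀ)).trace = ∑ k, ∑ i, T i k * U i k := by
      rw [← Matrix.mul_assoc, ← hT]
      calc (T * Uᵀ).trace = ∑ k, ∑ i, T k i * U k i := by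
            simp [Matrix.trace, Matrix.diag, Matrix.mul_apply, Matrix.transpose_apply]
      _ = ∑ k, ∑ i, T i k * U i k := Finset.sum_comm
    rw [htr1, htr2]
    refine Finset.sum_le_sum fun k _ => ?_
    by_cases hk : d k = 0
    · have hsumT : ∑ i, T i k * T i k = d k := by
        have h := hcol k k
        simpa using h
      have hTk : ∀ i ∈ Finset.univ, T i k * T i k = 0 := by
        intro i _
        have := (Finset.sum_eq_zero_iff_of_nonneg
          (fun i _ => mul_self_nonneg (T i k))).mp (by rw [hsumT, hk]) i (Finset.mem_univ i)
        exact this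
      have hTk' : ∀ i, T i k = 0 := fun i => mul_self_eq_zero.mp (hTk i (Finset.mem_univ i))
      simp [hTk', hk]
    · have hbk : b k = v k := hb k hk
      have hUik : ∀ i, U i k = (Real.sqrt (d k))⁻¹ * T i k := by
        intro i
        show b k i = _
        rw [hbk]
        exact hvapp k i
      have hsumT : ∑ i, T i k * T i k = d k := by
        have h := hcol k k
        simpa using h
      have hstep : ∑ i, T i k * U i k = (Real.sqrt (d k))⁻¹ * d k := by
        simp only [hUik]
        rw [← hsumT, Finset.mul_sum]
        refine Finset.sum_congr rfl fun i _ => by ring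
      rw [hstep]
      have hsq : Real.sqrt (d k) * Real.sqrt (d k) = d k := Real.mul_self_sqrt (hd0 k)
      have hpos : (0:ℝ) < Real.sqrt (d k) :=
        Real.sqrt_pos.mpr (lt_of_le_of_ne (hd0 k) (Ne.symm hk))
      have hle1 : Real.sqrt (d k) ≤ 1 := by nlinarith [hd1 k]
      have heq : (Real.sqrt (d k))⁻¹ * d k = Real.sqrt (d k) := by
        rw [← hsq]; field_simp; rw [Real.sqrt_sq hpos.le]
      rw [heq]
      nlinarith

theorem dk_sub_orthocols {n c : ℕ} (X : Matrix (Fin n) (Fin n) ℝ) (hX : Xᵀ * X = 1)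
    (g : Fin c → Fin n) (hg : Function.Injective g) :
    (Matrix.of (fun i m => X i (g m)))ᵀ * (Matrix.of fun i m => X i (g m)) = 1 := by
  ext a b
  have h := congrFun (congrFun hX (g a)) (g b)
  simp only [Matrix.mul_apply, Matrix.transpose_apply, Matrix.of_apply, Matrix.one_apply] at h ⊢
  rw [h]
  by_cases hab : a = b
  · simp [hab]
  · rw [if_neg hab, if_neg (fun hgg => hab (hg hgg))]

theorem dk_norm_sandwich {n a b : ℕ} (X : Matrix (Fin n) (Fin a) ℝ) (Y : Matrix (Fin n) (Fin b) ℝ)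
    (E : Matrix (Fin n) (Fin n) ℝ) (hX : Xᵀ * X = 1) (hY : Yᵀ * Y = 1) :
    ‖Xᵀ * E * Y‖ ≤ ‖E‖ := by
  have hXn : ‖Xᵀ‖ ≤ 1 := by rw [dk_transpose_norm_eq]; exact dk_norm_le_one_of_orthocols X hX
  have hYn : ‖Y‖ ≤ 1 := dk_norm_le_one_of_orthocols Y hY
  have h1 : ‖Xᵀ * E * Y‖ ≤ ‖Xᵀ * E‖ * ‖Y‖ := Matrix.l2_opNorm_mul _ _
  have h2 : ‖Xᵀ * E‖ ≤ ‖Xᵀ‖ * ‖E‖ := Matrix.l2_opNorm_mul _ _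
  nlinarith [norm_nonneg (Xᵀ * E), norm_nonneg Y, norm_nonneg E, norm_nonneg Xᵀ]

theorem dk_dot_shift {a b : ℕ} (M : Matrix (Fin a) (Fin b) ℝ) (u : Fin b → ℝ) (w : Fin a → ℝ) :
    (M *ᵥ u) ⬝ᵥ w = u ⬝ᵥ (Mᵀ *ᵥ w) := by
  simp only [dotProduct, Matrix.mulVec, Matrix.transpose_apply, Finset.sum_mul,
    Finset.mul_sum]
  rw [Finset.sum_comm]
  exact Finset.sum_congr rfl fun i _ => Finset.sum_congr rfl fun l _ => by ring

set_option maxHeartbeats 2000000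

/-- Extended Davis–Kahan bound with a polynomial transform, interval
choice (10) (`a₂ = ψ_{j+1}`, `b₂ = ψ_{j+r}`), Frobenius/basis-alignment version:
there exists `Q ∈ O(r)` with `‖W_j − V_j Q‖_F ≤ c_{n,r} ‖p(Φ) − Ψ‖₂ / δ₂`,
where `c_{n,r} = √(2 min(r, n−r))`.
Eigenvalues are 1-indexed in the paper; here `φ ⟨k-1⟩` plays the role of `φ_k`. -/
theorem stmt_13 (n j r : ℕ) (hj : 1 ≤ j) (hr : 1 ≤ r) (hn : j + r + 1 ≤ n)
    (Φ Ψ W V : Matrix (Fin n) (Fin n) ℝ)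
    (φ ψ : Fin n → ℝ) (hφmono : Monotone φ) (hψmono : Monotone ψ)
    (hW : Wᵀ * W = 1 ∧ W * Wᵀ = 1) (hV : Vᵀ * V = 1 ∧ V * Vᵀ = 1)
    (hΦ : Φ = W * Matrix.diagonal φ * Wᵀ) (hΨ : Ψ = V * Matrix.diagonal ψ * Vᵀ)
    (hgapφ1 : φ ⟨j - 1, by omega⟩ < φ ⟨j, by omega⟩)
    (hgapφ2 : φ ⟨j + r - 1, by omega⟩ < φ ⟨j + r, by omega⟩)
    (hgapψ1 : ψ ⟨j - 1, by omega⟩ < ψ ⟨j, by omega⟩)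
    (hgapψ2 : ψ ⟨j + r - 1, by omega⟩ < ψ ⟨j + r, by omega⟩)
    (p : Polynomial ℝ) (a₂ b₂ δ₂ : ℝ)
    (ha₂ : a₂ = ψ ⟨j, by omega⟩) (hb₂ : b₂ = ψ ⟨j + r - 1, by omega⟩)
    (hδ₂pos : 0 < δ₂)
    (houtside : ∀ l : Fin n, (l.val < j ∨ j + r ≤ l.val) →
        b₂ + δ₂ ≤ p.eval (φ l) ∨ p.eval (φ l) ≤ a₂ - δ₂)
    (hinside : ∀ k : Fin r, a₂ - p.eval (φ ⟨j + k, by omega⟩) < δ₂ ∧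
        p.eval (φ ⟨j + k, by omega⟩) - b₂ < δ₂)
    (Wj Vj : Matrix (Fin n) (Fin r) ℝ)
    (hWj : Wj = Matrix.of fun i (k : Fin r) => W i ⟨j + k, by omega⟩)
    (hVj : Vj = Matrix.of fun i (k : Fin r) => V i ⟨j + k, by omega⟩) :
    ∃ Q : Matrix (Fin r) (Fin r) ℝ, Qᵀ * Q = 1 ∧ Q * Qᵀ = 1 ∧
      frobNorm (Wj - Vj * Q) ≤
        Real.sqrt (2 * ((min r (n - r) : ℕ) : ℝ)) *
          specNorm ((Polynomial.aeval Φ) p - Ψ) / δ₂ := by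
  
  classical
  obtain ⟨hW1, hW2⟩ := hW
  obtain ⟨hV1, hV2⟩ := hV
  -- index embeddings
  set ι : Fin r → Fin n := fun k => ⟨j + k, by omega⟩ with hι
  set e : Fin (n - r) → Fin n :=
    fun m => if h : (m : ℕ) < j then ⟨m, by omega⟩ else ⟨(m : ℕ) + r, by omega⟩ with he
  have he_out : ∀ m : Fin (n - r), ((e m : ℕ) < j ∨ j + r ≤ (e m : ℕ)) := by
    intro m
    rw [he]
    dsimp only
    split
    · left; simpa using ‹(m : ℕ) < j›
    · right; simp only []
      have : ¬ (m : ℕ) < j := ‹_›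
      omega
  have hι_val : ∀ k : Fin r, (ι k : ℕ) = j + k := fun k => rfl
  have hbij : Function.Bijective (Sum.elim ι e) := by
    rw [Fintype.bijective_iff_injective_and_card]
    constructor
    · rintro (k1 | m1) (k2 | m2) h
      · simp only [Sum.elim_inl] at h
        have : (ι k1 : ℕ) = (ι k2 : ℕ) := by rw [h]
        simp only [hι_val] at this
        simpa using Fin.ext (by omega : (k1 : ℕ) = (k2 : ℕ))
      · exfalso
        simp only [Sum.elim_inl, Sum.elim_inr] at h
        have hv : (ι k1 : ℕ) = (e m2 : ℕ) := by rw [h]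
        have h2 := he_out m2
        rw [hι_val] at hv
        have : (k1 : ℕ) < r := k1.isLt
        omega
      · exfalso
        simp only [Sum.elim_inl, Sum.elim_inr] at h
        have hv : (e m1 : ℕ) = (ι k2 : ℕ) := by rw [h]
        have h2 := he_out m1
        rw [hι_val] at hv
        have : (k2 : ℕ) < r := k2.isLt
        omega
      · simp only [Sum.elim_inr] at h
        have hv : (e m1 : ℕ) = (e m2 : ℕ) := by rw [h]
        rw [he] at hv
        simp only [] at hv
        have hm1 : (m1 : ℕ) < n - r := m1.isLt
        have hm2 : (m2 : ℕ) < n - r := m2.isLt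
        congr
        by_cases h1 : (m1 : ℕ) < j <;> by_cases h2 : (m2 : ℕ) < j <;>
          simp [h1, h2] at hv <;> exact Fin.ext (by omega)
    · simp only [Fintype.card_sum, Fintype.card_fin]
      omega
  have hsplit : ∀ f : Fin n → ℝ,
      (∑ l, f l) = (∑ k : Fin r, f (ι k)) + (∑ m : Fin (n - r), f (e m)) := by
    intro f
    rw [← Fintype.sum_bijective (Sum.elim ι e) hbij (fun x => f (Sum.elim ι e x)) f
      (fun x => rfl)]
    rw [Fintype.sum_sum_type]
    rfl
  -- matrices
  set A : Matrix (Fin n) (Fin n) ℝ := Wᵀ * V with hA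
  have hA1 : Aᵀ * A = 1 := by
    rw [hA, Matrix.transpose_mul, Matrix.transpose_transpose]
    calc Vᵀ * W * (Wᵀ * V) = Vᵀ * (W * Wᵀ) * V := by noncomm_ring
    _ = 1 := by rw [hW2, Matrix.mul_one, hV1]
  set pφ : Fin n → ℝ := fun l => p.eval (φ l) with hpφ
  set E : Matrix (Fin n) (Fin n) ℝ := (Polynomial.aeval Φ) p - Ψ with hE
  have hpΦ : (Polynomial.aeval Φ) p = W * Matrix.diagonal pφ * Wᵀ := by
    rw [hΦ, dk_aeval_conj W (Matrix.diagonal φ) hW1 hW2 p, dk_aeval_diag]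
  set F : Matrix (Fin n) (Fin n) ℝ := Matrix.diagonal pφ * A - A * Matrix.diagonal ψ with hF
  have hWEV : Wᵀ * E * V = F := by
    rw [hE, hF, hpΦ, hΨ, hA]
    rw [Matrix.mul_sub, Matrix.sub_mul]
    congr 1
    · calc Wᵀ * (W * Matrix.diagonal pφ * Wᵀ) * V
          = (Wᵀ * W) * Matrix.diagonal pφ * (Wᵀ * V) := by noncomm_ring
      _ = Matrix.diagonal pφ * (Wᵀ * V) := by rw [hW1, Matrix.one_mul]
    · calc Wᵀ * (V * Matrix.diagonal ψ * Vᵀ) * V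
          = (Wᵀ * V) * Matrix.diagonal ψ * (Vᵀ * V) := by noncomm_ring
      _ = Wᵀ * V * Matrix.diagonal ψ := by rw [hV1, Matrix.mul_one]
  have hFentry : ∀ l i : Fin n, F l i = (pφ l - ψ i) * A l i := by
    intro l i
    rw [hF]
    simp only [Matrix.sub_apply, Matrix.diagonal_mul, Matrix.mul_diagonal]
    ring
  -- eigenvalue bracketing
  have hψin : ∀ k : Fin r, a₂ ≤ ψ (ι k) ∧ ψ (ι k) ≤ b₂ := by
    intro k
    constructor
    · rw [ha₂]
      exact hψmono (by rw [Fin.mk_le_mk]; omega)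
    · rw [hb₂]
      refine hψmono (by rw [Fin.le_def]; simp only [hι_val]; omega)
  have hkey : ∀ (m : Fin (n - r)) (k : Fin r),
      δ₂ ^ 2 * (A (e m) (ι k)) ^ 2 ≤ (F (e m) (ι k)) ^ 2 := by
    intro m k
    obtain ⟨hlo, hhi⟩ := hψin k
    rw [hFentry]
    rcases houtside (e m) (he_out m) with hcase | hcase
    · have hgap : δ₂ ≤ pφ (e m) - ψ (ι k) := by
        rw [hpφ]; dsimp only; linarith
      have hsq : δ₂ ^ 2 ≤ (pφ (e m) - ψ (ι k)) ^ 2 := by nlinarith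
      calc δ₂ ^ 2 * (A (e m) (ι k)) ^ 2 ≤ (pφ (e m) - ψ (ι k)) ^ 2 * (A (e m) (ι k)) ^ 2 :=
            mul_le_mul_of_nonneg_right hsq (sq_nonneg _)
      _ = ((pφ (e m) - ψ (ι k)) * A (e m) (ι k)) ^ 2 := (mul_pow _ _ 2).symm
    · have hgap : δ₂ ≤ ψ (ι k) - pφ (e m) := by
        rw [hpφ]; dsimp only; linarith
      have hsq : δ₂ ^ 2 ≤ (pφ (e m) - ψ (ι k)) ^ 2 := by nlinarith
      calc δ₂ ^ 2 * (A (e m) (ι k)) ^ 2 ≤ (pφ (e m) - ψ (ι k)) ^ 2 * (A (e m) (ι k)) ^ 2 :=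
            mul_le_mul_of_nonneg_right hsq (sq_nonneg _)
      _ = ((pφ (e m) - ψ (ι k)) * A (e m) (ι k)) ^ 2 := (mul_pow _ _ 2).symm
  -- injectivity of index maps
  have hι_inj : Function.Injective ι := fun k1 k2 h =>
    hbij.1 (show Sum.elim ι e (Sum.inl k1) = Sum.elim ι e (Sum.inl k2) by simpa using h)
      |> Sum.inl_injective
  have he_inj : Function.Injective e := fun m1 m2 h =>
    hbij.1 (show Sum.elim ι e (Sum.inr m1) = Sum.elim ι e (Sum.inr m2) by simpa using h)
      |> Sum.inr_injective
  -- submatrices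
  have hWjι : Wj = Matrix.of fun i k => W i (ι k) := by rw [hWj]
  have hVjι : Vj = Matrix.of fun i k => V i (ι k) := by rw [hVj]
  set Wperp : Matrix (Fin n) (Fin (n - r)) ℝ := Matrix.of (fun i m => W i (e m)) with hWperp
  have hWjcols : Wjᵀ * Wj = 1 := by rw [hWjι]; exact dk_sub_orthocols W hW1 ι hι_inj
  have hVjcols : Vjᵀ * Vj = 1 := by rw [hVjι]; exact dk_sub_orthocols V hV1 ι hι_inj
  have hWperpcols : Wperpᵀ * Wperp = 1 := dk_sub_orthocols W hW1 e he_inj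
  set N : Matrix (Fin (n - r)) (Fin r) ℝ := Wperpᵀ * E * Vj with hN
  have hNnorm : ‖N‖ ≤ ‖E‖ := dk_norm_sandwich Wperp Vj E hWperpcols hVjcols
  have hNentry : ∀ (m : Fin (n - r)) (k : Fin r), N m k = F (e m) (ι k) := by
    intro m k
    rw [← hWEV, hN, hWperp, hVjι]
    simp only [Matrix.mul_apply, Matrix.transpose_apply, Matrix.of_apply]
  -- the sin-theta bound
  have hGsum : δ₂ ^ 2 * (∑ m : Fin (n - r), ∑ k : Fin r, (A (e m) (ι k)) ^ 2)
      ≤ ((min r (n - r) : ℕ) : ℝ) * ‖E‖ ^ 2 := by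
    have c1 : δ₂ ^ 2 * (∑ m : Fin (n - r), ∑ k : Fin r, (A (e m) (ι k)) ^ 2)
        = ∑ m : Fin (n - r), ∑ k : Fin r, δ₂ ^ 2 * (A (e m) (ι k)) ^ 2 := by
      rw [Finset.mul_sum]
      exact Finset.sum_congr rfl fun m _ => Finset.mul_sum _ _ _
    have c2 : ∑ m : Fin (n - r), ∑ k : Fin r, δ₂ ^ 2 * (A (e m) (ι k)) ^ 2
        ≤ ∑ m : Fin (n - r), ∑ k : Fin r, (N m k) ^ 2 := by
      refine Finset.sum_le_sum fun m _ => Finset.sum_le_sum fun k _ => ?_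
      rw [hNentry m k]
      exact hkey m k
    have c3 : ∑ m : Fin (n - r), ∑ k : Fin r, (N m k) ^ 2
        ≤ ((min (n - r) r : ℕ) : ℝ) * ‖N‖ ^ 2 := dk_frobSq_le_min N
    have c4 : ((min (n - r) r : ℕ) : ℝ) * ‖N‖ ^ 2 ≤ ((min r (n - r) : ℕ) : ℝ) * ‖E‖ ^ 2 := by
      rw [min_comm (n - r) r]
      have h5 : ‖N‖ ^ 2 ≤ ‖E‖ ^ 2 := by nlinarith [norm_nonneg N, norm_nonneg E]
      exact mul_le_mul_of_nonneg_left h5 (by positivity)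
    linarith
  -- the overlap matrix
  set S : Matrix (Fin r) (Fin r) ℝ := Wjᵀ * Vj with hS
  have hSentry : ∀ k k' : Fin r, S k k' = A (ι k) (ι k') := by
    intro k k'
    rw [hS, hA, hWjι, hVjι]
    simp only [Matrix.mul_apply, Matrix.transpose_apply, Matrix.of_apply]
  have hcontr : ∀ x : Fin r → ℝ, x ⬝ᵥ ((Sᵀ * S) *ᵥ x) ≤ x ⬝ᵥ x := by
    intro x
    set y : Fin n → ℝ := Vj *ᵥ x with hy
    set z : Fin r → ℝ := Wjᵀ *ᵥ y with hz
    have hyy : y ⬝ᵥ y = x ⬝ᵥ x := by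
      rw [hy, dk_dot_shift Vj x (Vj *ᵥ x), Matrix.mulVec_mulVec, hVjcols, Matrix.one_mulVec]
    have hWy : ∀ q : Fin r → ℝ, y ⬝ᵥ (Wj *ᵥ q) = z ⬝ᵥ q := by
      intro q
      rw [dotProduct_comm, dk_dot_shift Wj q y, dotProduct_comm, hz]
    have hxSSx : x ⬝ᵥ ((Sᵀ * S) *ᵥ x) = z ⬝ᵥ z := by
      rw [hS, Matrix.transpose_mul, Matrix.transpose_transpose]
      have : (Vjᵀ * Wj * (Wjᵀ * Vj)) *ᵥ x = Vjᵀ *ᵥ (Wj *ᵥ z) := by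
        rw [hz, hy]
        rw [← Matrix.mulVec_mulVec, ← Matrix.mulVec_mulVec, ← Matrix.mulVec_mulVec]
      rw [this, ← dk_dot_shift Vj x (Wj *ᵥ z), ← hy, hWy]
    have huu : (Wj *ᵥ z) ⬝ᵥ (Wj *ᵥ z) = z ⬝ᵥ z := by
      rw [dk_dot_shift Wj z (Wj *ᵥ z), Matrix.mulVec_mulVec, hWjcols, Matrix.one_mulVec]
    have hw : (0:ℝ) ≤ (y - Wj *ᵥ z) ⬝ᵥ (y - Wj *ᵥ z) :=
      Finset.sum_nonneg fun i _ => mul_self_nonneg _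
    have hexp : (y - Wj *ᵥ z) ⬝ᵥ (y - Wj *ᵥ z) = y ⬝ᵥ y - z ⬝ᵥ z := by
      rw [sub_dotProduct, dotProduct_sub, dotProduct_sub]
      rw [hWy z, huu]
      have : (Wj *ᵥ z) ⬝ᵥ y = z ⬝ᵥ z := by
        rw [dotProduct_comm, hWy z]
      rw [this]
      ring
    rw [hxSSx, ← hyy]
    linarith [hw, hexp.symm.le, hexp.le]
  obtain ⟨Q, hQ1, hQ2, hQtr⟩ := dk_procrustes S hcontr
  refine ⟨Q, hQ1, hQ2, ?_⟩
  -- column sums of A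
  have hcolA : ∀ k' : Fin r, (∑ l, (A l (ι k')) ^ 2) = 1 := by
    intro k'
    have h := congrFun (congrFun hA1 (ι k')) (ι k')
    simp only [Matrix.mul_apply, Matrix.transpose_apply, Matrix.one_apply_eq] at h
    rw [← h]
    exact Finset.sum_congr rfl fun l _ => by ring
  have htrSS : (Sᵀ * S).trace = ∑ k' : Fin r, ∑ k : Fin r, (A (ι k) (ι k')) ^ 2 := by
    have : (Sᵀ * S).trace = ∑ k' : Fin r, ∑ k : Fin r, S k k' * S k k' := by
      simp [Matrix.trace, Matrix.diag, Matrix.mul_apply]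
    rw [this]
    exact Finset.sum_congr rfl fun k' _ => Finset.sum_congr rfl fun k _ => by
      rw [hSentry]; ring
  have hmain : (r : ℝ) - (Sᵀ * S).trace = ∑ m : Fin (n - r), ∑ k' : Fin r, (A (e m) (ι k')) ^ 2 := by
    have h3 : ∑ k' : Fin r, (1:ℝ)
        = (Sᵀ * S).trace + ∑ k' : Fin r, ∑ m : Fin (n - r), (A (e m) (ι k')) ^ 2 := by
      rw [htrSS, ← Finset.sum_add_distrib]
      refine Finset.sum_congr rfl fun k' _ => ?_
      rw [← hcolA k', hsplit (fun l => (A l (ι k')) ^ 2)]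
    have h4 : (r : ℝ) = (Sᵀ * S).trace + ∑ k' : Fin r, ∑ m : Fin (n - r), (A (e m) (ι k')) ^ 2 := by
      simpa using h3
    rw [Finset.sum_comm] at h4
    linarith
  -- trace of the difference
  set X : Matrix (Fin n) (Fin r) ℝ := Wj - Vj * Q with hX
  have htrX : (Xᵀ * X).trace = 2 * (r : ℝ) - 2 * (S * Q).trace := by
    have expand : Xᵀ * X
        = Wjᵀ * Wj - Wjᵀ * (Vj * Q) - Qᵀ * (Vjᵀ * Wj) + Qᵀ * ((Vjᵀ * Vj) * Q) := by
      rw [hX, Matrix.transpose_sub, Matrix.transpose_mul, Matrix.sub_mul, Matrix.mul_sub,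
        Matrix.mul_sub, Matrix.mul_assoc Qᵀ Vjᵀ Wj, Matrix.mul_assoc Qᵀ Vjᵀ (Vj * Q),
        ← Matrix.mul_assoc Vjᵀ Vj Q]
      abel
    rw [expand, hWjcols, hVjcols]
    rw [Matrix.trace_add, Matrix.trace_sub, Matrix.trace_sub]
    have t1 : (Wjᵀ * (Vj * Q)).trace = (S * Q).trace := by rw [hS, ← Matrix.mul_assoc]
    have t2 : (Qᵀ * (Vjᵀ * Wj)).trace = (S * Q).trace := by
      rw [show Vjᵀ * Wj = Sᵀ by rw [hS, Matrix.transpose_mul, Matrix.transpose_transpose],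
        ← Matrix.transpose_mul, Matrix.trace_transpose]
    have t3 : (Qᵀ * (1 * Q)).trace = (r : ℝ) := by
      rw [Matrix.one_mul, hQ1, Matrix.trace_one]
      simp
    have t4 : (1 : Matrix (Fin r) (Fin r) ℝ).trace = (r : ℝ) := by
      rw [Matrix.trace_one]; simp
    rw [t1, t2, t3, t4]
    ring
  have hfrobX : ∑ i, ∑ k, (X i k) ^ 2 = (Xᵀ * X).trace := by
    have : (Xᵀ * X).trace = ∑ k, ∑ i, X i k * X i k := by
      simp [Matrix.trace, Matrix.diag, Matrix.mul_apply]
    rw [this, Finset.sum_comm]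
    exact Finset.sum_congr rfl fun i _ => Finset.sum_congr rfl fun k _ => by ring
  -- final inequality
  have hδsq : (0:ℝ) < δ₂ ^ 2 := by positivity
  have h6 : δ₂ ^ 2 * ((r : ℝ) - (Sᵀ * S).trace) ≤ ((min r (n - r) : ℕ) : ℝ) * ‖E‖ ^ 2 := by
    rw [hmain]; exact hGsum
  have h7 : (r : ℝ) - (S * Q).trace ≤ ((min r (n - r) : ℕ) : ℝ) * ‖E‖ ^ 2 / δ₂ ^ 2 := by
    rw [le_div_iff₀ hδsq]
    calc ((r : ℝ) - (S * Q).trace) * δ₂ ^ 2 ≤ ((r : ℝ) - (Sᵀ * S).trace) * δ₂ ^ 2 := by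
          nlinarith [hQtr]
    _ ≤ _ := by nlinarith [h6]
  have hbound : ∑ i, ∑ k, (X i k) ^ 2
      ≤ (Real.sqrt (2 * ((min r (n - r) : ℕ) : ℝ)) * ‖E‖ / δ₂) ^ 2 := by
    have hsqrt : (Real.sqrt (2 * ((min r (n - r) : ℕ) : ℝ)) * ‖E‖ / δ₂) ^ 2
        = 2 * ((min r (n - r) : ℕ) : ℝ) * ‖E‖ ^ 2 / δ₂ ^ 2 := by
      rw [div_pow, mul_pow, Real.sq_sqrt (by positivity)]
    rw [hsqrt, hfrobX, htrX]
    calc 2 * (r : ℝ) - 2 * (S * Q).trace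
        = 2 * ((r : ℝ) - (S * Q).trace) := by ring
    _ ≤ 2 * (((min r (n - r) : ℕ) : ℝ) * ‖E‖ ^ 2 / δ₂ ^ 2) := by linarith [h7]
    _ = 2 * ((min r (n - r) : ℕ) : ℝ) * ‖E‖ ^ 2 / δ₂ ^ 2 := by ring
  have hRHSnn : (0:ℝ) ≤ Real.sqrt (2 * ((min r (n - r) : ℕ) : ℝ)) * ‖E‖ / δ₂ := by positivity
  have hfinal : frobNorm X ≤ Real.sqrt (2 * ((min r (n - r) : ℕ) : ℝ)) * ‖E‖ / δ₂ := by
    rw [show frobNorm X = Real.sqrt (∑ i, ∑ k, (X i k) ^ 2) from rfl]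
    calc Real.sqrt (∑ i, ∑ k, (X i k) ^ 2)
        ≤ Real.sqrt ((Real.sqrt (2 * ((min r (n - r) : ℕ) : ℝ)) * ‖E‖ / δ₂) ^ 2) :=
          Real.sqrt_le_sqrt hbound
    _ = _ := Real.sqrt_sq hRHSnn
  exact hfinal
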